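/- Fix t > 0 and let J = min{i : X_i > t} (almost surely finite). Then the vector threshold estimator ρ̂ = Y_J / s(t) ∈ ℝ^d is unbiased, E[ρ̂] = ρ, and its covariance matrix is Cov(ρ̂) = (1/s²(t)) · ( A Aᵀ + Var(X_J) · ρ ρᵀ ), where Var(X_J) = 1 + t·s(t) − s²(t). In particular tr Cov(ρ̂) = (1/s²(t)) · ( tr(A Aᵀ) + (1 + t·s(t) − s²(t)) · ‖ρ‖² ). -/

import Mathlib

set_option autoImplicit false

open MeasureTheory ProbabilityTheory Matrix

/-- The standard normal density `φ(x) = e^{-x²/2} / √(2π)`. -/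
noncomputable def stdGaussianPDF (x : ℝ) : ℝ := Real.exp (-x ^ 2 / 2) / Real.sqrt (2 * Real.pi)

/-- The standard normal tail `Q(x) = ∫ₓ^∞ φ(u) du`. -/
noncomputable def gaussTail (x : ℝ) : ℝ := ∫ u in Set.Ioi x, stdGaussianPDF u

/-- The inverse Mills ratio `s(t) = φ(t)/Q(t)`. -/
noncomputable def invMills (t : ℝ) : ℝ := stdGaussianPDF t / gaussTail t

/-!
Summing `P(J = j, W_J ∈ ·) = P(X ≤ t)^j P(X > t, (X, Z) ∈ ·)` over `j` shows that the pair
`W_J = (X_J, Z_J)` has the law of `(X, Z)` conditioned on `X > t`, namely the standard normal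
truncated to `(t, ∞)` times `N(0, I_d)`. So `Y_J = ρ X_J + A Z_J` with `Z_J` centred, isotropic
and independent of `X_J`, whence `E[Y_J] = E[X_J] ρ` and `E[Y_J Y_Jᵀ] = E[X_J²] ρρᵀ + AAᵀ`.
The truncated moments `E[X_J] = s(t)` and `E[X_J²] = 1 + t s(t)` come from integrating
`(-φ)' = x φ` and `(-x φ)' = x² φ - φ` over `(t, ∞)`.
-/

open Real Set

theorem aemeasurable_of_map_eq {α β : Type*} [MeasurableSpace α] [MeasurableSpace β]
    {P : Measure α} {f : α → β} {μ : Measure β} [NeZero μ] (h : P.map f = μ) :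
    AEMeasurable f P :=
  AEMeasurable.of_map_ne_zero (h ▸ NeZero.ne μ)

theorem integral_Ioi_of_hasDerivAt_of_integrableOn {f f' : ℝ → ℝ} {a : ℝ}
    (hderiv : ∀ x ∈ Ici a, HasDerivAt f (f' x) x) (hf : IntegrableOn f (Ioi a))
    (hf' : IntegrableOn f' (Ioi a)) : ∫ x in Ioi a, f' x = -f a := by
  rw [integral_Ioi_of_hasDerivAt_of_tendsto' hderiv hf'
    (tendsto_zero_of_hasDerivAt_of_integrableOn_Ioi
      (fun x hx => hderiv x (mem_Ici_of_Ioi hx)) hf' hf), zero_sub]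

theorem cond_prod_univ {α β : Type*} [MeasurableSpace α] [MeasurableSpace β] (μ : Measure α)
    [SFinite μ] (ν : Measure β) [IsProbabilityMeasure ν] (s : Set α) :
    (μ.prod ν)[|s ×ˢ univ] = μ[|s].prod ν := by
  rw [ProbabilityTheory.cond, ProbabilityTheory.cond, Measure.prod_smul_left, Measure.prod_prod,
    measure_univ, mul_one, Measure.restrict_prod_eq_prod_univ]

-- The `Function.update` lists the constraint on each `w i`, `i ≤ j`, turning the event into a
-- finite intersection of preimages, to which independence applies.
theorem firstEntry_eq_and_mem_iff {E : Type*} {B : Set E} {w : ℕ → E} {n : ℕ}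
    (hn : w n ∈ B ∧ ∀ i < n, w i ∉ B) (s : Set E) (j : ℕ) :
    (n = j ∧ w n ∈ s) ↔
      ∀ i ∈ Finset.range (j + 1), w i ∈ Function.update (fun _ => Bᶜ) j (B ∩ s) i := by
  constructor
  · rintro ⟨rfl, hs⟩ i hi
    rcases (Finset.mem_range_succ_iff.1 hi).lt_or_eq with hlt | rfl
    · simpa [Function.update_of_ne hlt.ne] using hn.2 i hlt
    · simpa using ⟨hn.1, hs⟩
  · intro h
    have hj : w j ∈ B ∩ s := by simpa using h j (by simp)
    have hnj : n = j := by
      rcases lt_trichotomy n j with hlt | heq | hgt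
      · simpa [Function.update_of_ne hlt.ne, hn.1] using h n (Finset.mem_range.2 (by omega))
      · exact heq
      · exact absurd hj.1 (hn.2 j hgt)
    exact ⟨hnj, hnj ▸ hj.2⟩

section FirstEntry

variable {Ω E : Type*} [MeasurableSpace Ω] [MeasurableSpace E] {P : Measure Ω}
  {W : ℕ → Ω → E} {J : Ω → ℕ} {B : Set E}

theorem measure_eq_tsum_inter_preimage_singleton (hJ : Measurable J) (A : Set Ω) :
    P A = ∑' j, P (J ⁻¹' {j} ∩ A) := by
  rw [← Measure.restrict_apply_univ, ← preimage_univ (f := J), ← iUnion_of_singleton,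
    preimage_iUnion,
    measure_iUnion (pairwise_disjoint_fiber J) fun j => hJ (measurableSet_singleton j)]
  simp_rw [Measure.restrict_apply (hJ (measurableSet_singleton _))]

theorem aemeasurable_comp_index (hW : ∀ i, AEMeasurable (W i) P) (hJ : Measurable J) :
    AEMeasurable (fun ω => W (J ω) ω) P :=
  ⟨fun ω => (hW (J ω)).mk _ ω,
    (measurable_from_prod_countable_left (f := fun p : Ω × ℕ => (hW p.2).mk _ p.1)
      fun i => (hW i).measurable_mk).comp (measurable_id.prodMk hJ),
    by filter_upwards [ae_all_iff.2 fun i => (hW i).ae_eq_mk] with ω hω using hω (J ω)⟩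

variable {μ : Measure E} [IsProbabilityMeasure μ]

theorem measure_firstEntry_eq_and_mem (hindep : iIndepFun W P) (hlaw : ∀ i, P.map (W i) = μ)
    (hB : MeasurableSet B) (hJB : ∀ᵐ ω ∂P, W (J ω) ω ∈ B ∧ ∀ i < J ω, W i ω ∉ B)
    {s : Set E} (hs : MeasurableSet s) (j : ℕ) :
    P (J ⁻¹' {j} ∩ (fun ω => W (J ω) ω) ⁻¹' s) = μ (B ∩ s) * μ Bᶜ ^ j := by
  set C : ℕ → Set E := Function.update (fun _ => Bᶜ) j (B ∩ s)
  have hC : ∀ i, MeasurableSet (C i) := fun i => by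
    rcases eq_or_ne i j with rfl | hij
    · simpa [C] using hB.inter hs
    · simpa [C, Function.update_of_ne hij] using hB.compl
  have hevent : (J ⁻¹' {j} ∩ (fun ω => W (J ω) ω) ⁻¹' s : Set Ω)
      =ᵐ[P] (⋂ i ∈ Finset.range (j + 1), W i ⁻¹' C i : Set Ω) := by
    refine Filter.eventuallyEq_set.2 ?_
    filter_upwards [hJB] with ω hω
    simpa using firstEntry_eq_and_mem_iff (w := fun i => W i ω) hω s j
  have hlawC : ∀ i, P (W i ⁻¹' C i) = μ (C i) := fun i => by
    rw [← hlaw i, Measure.map_apply_of_aemeasurable (aemeasurable_of_map_eq (hlaw i)) (hC i)]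
  rw [measure_congr hevent, hindep.meas_biInter fun i _ => ⟨C i, hC i, rfl⟩,
    Finset.prod_range_succ, Finset.prod_congr rfl fun i hi => by
      rw [hlawC, show C i = Bᶜ from Function.update_of_ne (Finset.mem_range.1 hi).ne _ _],
    hlawC]
  simp [C, mul_comm]

theorem map_firstEntry_eq_cond (hindep : iIndepFun W P) (hlaw : ∀ i, P.map (W i) = μ)
    (hB : MeasurableSet B) (hJ : Measurable J)
    (hJB : ∀ᵐ ω ∂P, W (J ω) ω ∈ B ∧ ∀ i < J ω, W i ω ∉ B) :
    P.map (fun ω => W (J ω) ω) = μ[|B] := by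
  ext s hs
  rw [Measure.map_apply_of_aemeasurable
      (aemeasurable_comp_index (fun i => aemeasurable_of_map_eq (hlaw i)) hJ) hs,
    measure_eq_tsum_inter_preimage_singleton hJ, cond_apply hB]
  simp_rw [measure_firstEntry_eq_and_mem hindep hlaw hB hJB hs]
  rw [ENNReal.tsum_mul_left, ENNReal.tsum_geometric, prob_compl_eq_one_sub hB,
    ENNReal.sub_sub_cancel ENNReal.one_ne_top prob_le_one, mul_comm]

end FirstEntry

structure IsCenteredIsotropic {ι : Type*} [DecidableEq ι] (κ : Measure (ι → ℝ)) : Prop where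
  memLp_eval : ∀ k, MemLp (fun z => z k) 2 κ
  integral_eval : ∀ k, ∫ z, z k ∂κ = 0
  integral_eval_mul_eval : ∀ k l, ∫ z, z k * z l ∂κ = (1 : Matrix ι ι ℝ) k l

namespace IsCenteredIsotropic

variable {ι m n : Type*} [Fintype ι] [DecidableEq ι] {κ : Measure (ι → ℝ)}

theorem memLp_mulVec (h : IsCenteredIsotropic κ) (A : Matrix m ι ℝ) (i : m) :
    MemLp (fun z => (A *ᵥ z) i) 2 κ := by
  simp only [mulVec, dotProduct]
  exact memLp_finsetSum _ fun k _ => (h.memLp_eval k).const_mul (A i k)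

theorem integral_mulVec [IsFiniteMeasure κ] (h : IsCenteredIsotropic κ) (A : Matrix m ι ℝ)
    (i : m) : ∫ z, (A *ᵥ z) i ∂κ = 0 := by
  simp only [mulVec, dotProduct]
  rw [integral_finsetSum _ fun k _ => ((h.memLp_eval k).integrable one_le_two).const_mul _]
  simp [integral_const_mul, h.integral_eval]

theorem integral_mulVec_mul_mulVec (h : IsCenteredIsotropic κ) (A : Matrix m ι ℝ)
    (B : Matrix n ι ℝ) (i : m) (j : n) :
    ∫ z, (A *ᵥ z) i * (B *ᵥ z) j ∂κ = (A * Bᵀ) i j := by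
  have hint : ∀ k l, Integrable (fun z => A i k * B j l * (z k * z l)) κ := fun k l =>
    ((h.memLp_eval k).integrable_mul (h.memLp_eval l)).const_mul _
  have hexpand : ∀ z : ι → ℝ,
      (A *ᵥ z) i * (B *ᵥ z) j = ∑ k, ∑ l, A i k * B j l * (z k * z l) := fun z => by
    simp only [mulVec, dotProduct, Finset.sum_mul_sum, mul_mul_mul_comm]
  simp_rw [hexpand]
  rw [integral_finsetSum _ fun k _ => integrable_finsetSum _ fun l _ => hint k l]
  simp_rw [integral_finsetSum _ fun l _ => hint _ l, integral_const_mul,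
    h.integral_eval_mul_eval, Matrix.one_apply]
  simp [Matrix.mul_apply]

end IsCenteredIsotropic

theorem isCenteredIsotropic_pi_gaussianReal (ι : Type*) [Fintype ι] [DecidableEq ι] :
    IsCenteredIsotropic (Measure.pi fun _ : ι => gaussianReal 0 1) where
  memLp_eval k := (memLp_id_gaussianReal 2).comp_measurePreserving (measurePreserving_eval _ k)
  integral_eval k := by rw [integral_eval, integral_id_gaussianReal]
  integral_eval_mul_eval k l := by
    rcases eq_or_ne k l with rfl | hkl
    · have h := variance_of_integral_eq_zero aemeasurable_id
        (integral_id_gaussianReal (μ := 0) (v := 1))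
      rw [variance_id_gaussianReal] at h
      rw [integral_comp_eval (μ := fun _ : ι => gaussianReal 0 1) (f := fun x : ℝ => x * x)
        (by fun_prop)]
      simpa [← sq] using h.symm
    · have hind := (iIndepFun_pi (μ := fun _ : ι => gaussianReal 0 1)
        (X := fun _ x => x) fun _ => aemeasurable_id).indepFun hkl
      rw [hind.integral_fun_mul_eq_mul_integral (measurable_pi_apply k).aestronglyMeasurable
        (measurable_pi_apply l).aestronglyMeasurable]
      simp [integral_eval, hkl]

section LinearModel

variable {ι m : Type*} [Fintype ι] [DecidableEq ι] {ν : Measure ℝ} {κ : Measure (ι → ℝ)}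
  [IsProbabilityMeasure ν] [IsProbabilityMeasure κ]

theorem integral_linearModel (hν : MemLp id 2 ν) (hκ : IsCenteredIsotropic κ) (ρ : m → ℝ)
    (A : Matrix m ι ℝ) (i : m) :
    ∫ p, ρ i * p.1 + (A *ᵥ p.2) i ∂ν.prod κ = ρ i * ∫ x, x ∂ν := by
  have hsignal : Integrable (fun p : ℝ × (ι → ℝ) => p.1) (ν.prod κ) :=
    (hν.integrable one_le_two).comp_fst κ
  rw [integral_add (hsignal.const_mul _)
      (((hκ.memLp_mulVec A i).integrable one_le_two).comp_snd ν),
    integral_const_mul, integral_fun_fst (fun x => x), integral_fun_snd (fun z => (A *ᵥ z) i),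
    hκ.integral_mulVec]
  simp

theorem integral_linearModel_mul (hν : MemLp id 2 ν) (hκ : IsCenteredIsotropic κ) (ρ : m → ℝ)
    (A : Matrix m ι ℝ) (i j : m) :
    ∫ p, (ρ i * p.1 + (A *ᵥ p.2) i) * (ρ j * p.1 + (A *ᵥ p.2) j) ∂ν.prod κ
      = ρ i * ρ j * ∫ x, x ^ 2 ∂ν + (A * Aᵀ) i j := by
  have hsq : Integrable (fun p : ℝ × (ι → ℝ) => ρ i * ρ j * p.1 ^ 2) (ν.prod κ) :=
    (hν.integrable_sq.comp_fst κ).const_mul _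
  have hcross_int : ∀ k, Integrable (fun p : ℝ × (ι → ℝ) => p.1 * (A *ᵥ p.2) k) (ν.prod κ) :=
    fun k => (hν.integrable one_le_two).mul_prod ((hκ.memLp_mulVec A k).integrable one_le_two)
  have hcross : Integrable (fun p : ℝ × (ι → ℝ) =>
      ρ i * (p.1 * (A *ᵥ p.2) j) + ρ j * (p.1 * (A *ᵥ p.2) i)) (ν.prod κ) :=
    ((hcross_int j).const_mul _).fun_add ((hcross_int i).const_mul _)
  have hnoise : Integrable (fun p : ℝ × (ι → ℝ) => (A *ᵥ p.2) i * (A *ᵥ p.2) j) (ν.prod κ) :=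
    ((hκ.memLp_mulVec A i).integrable_mul (hκ.memLp_mulVec A j)).comp_snd ν
  have hcross_zero : ∀ k, ∫ p : ℝ × (ι → ℝ), p.1 * (A *ᵥ p.2) k ∂ν.prod κ = 0 := fun k => by
    rw [integral_prod_mul (fun x => x) (fun z => (A *ᵥ z) k), hκ.integral_mulVec, mul_zero]
  have hexpand : ∀ p : ℝ × (ι → ℝ), (ρ i * p.1 + (A *ᵥ p.2) i) * (ρ j * p.1 + (A *ᵥ p.2) j)
      = ρ i * ρ j * p.1 ^ 2 + (ρ i * (p.1 * (A *ᵥ p.2) j) + ρ j * (p.1 * (A *ᵥ p.2) i))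
        + (A *ᵥ p.2) i * (A *ᵥ p.2) j := fun p => by ring
  simp_rw [hexpand]
  rw [integral_add (hsq.fun_add hcross) hnoise, integral_add hsq hcross,
    integral_add ((hcross_int j).const_mul _) ((hcross_int i).const_mul _),
    integral_const_mul, integral_const_mul, integral_const_mul, hcross_zero, hcross_zero,
    integral_fun_fst (fun x => x ^ 2), integral_fun_snd (fun z => (A *ᵥ z) i * (A *ᵥ z) j),
    hκ.integral_mulVec_mul_mulVec]
  simp

end LinearModel

theorem stdGaussianPDF_eq_gaussianPDFReal : stdGaussianPDF = gaussianPDFReal 0 1 := by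
  ext x
  simp [stdGaussianPDF, gaussianPDFReal, div_eq_inv_mul, mul_comm]

theorem stdGaussianPDF_pos (x : ℝ) : 0 < stdGaussianPDF x := by
  rw [stdGaussianPDF_eq_gaussianPDFReal]
  exact gaussianPDFReal_pos _ _ _ one_ne_zero

theorem hasDerivAt_stdGaussianPDF (x : ℝ) :
    HasDerivAt stdGaussianPDF (-x * stdGaussianPDF x) x := by
  have h := (((hasDerivAt_pow 2 x).const_mul (-1 / 2)).exp).div_const √(2 * π)
  have hfun : stdGaussianPDF = fun y => rexp (-1 / 2 * y ^ 2) / √(2 * π) := by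
    ext y; rw [stdGaussianPDF]; ring_nf
  rw [hfun]
  refine h.congr_deriv ?_
  simp only [Nat.cast_ofNat]
  ring

theorem integrable_pow_mul_stdGaussianPDF (n : ℕ) :
    Integrable fun x => x ^ n * stdGaussianPDF x := by
  have h := (integrable_rpow_mul_exp_neg_mul_sq (b := 1 / 2) (by norm_num)
    (s := n) (by linarith [n.cast_nonneg (α := ℝ)])).div_const √(2 * π)
  refine h.congr (ae_of_all _ fun x => ?_)
  simp only [Real.rpow_natCast, stdGaussianPDF, mul_div_assoc]
  ring_nf

theorem setIntegral_Ioi_mul_stdGaussianPDF (t : ℝ) :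
    ∫ x in Ioi t, x * stdGaussianPDF x = stdGaussianPDF t := by
  have h := integral_Ioi_of_hasDerivAt_of_integrableOn (f := fun x => -stdGaussianPDF x)
    (a := t) (fun x _ => (hasDerivAt_stdGaussianPDF x).neg)
    (by simpa using (integrable_pow_mul_stdGaussianPDF 0).neg.integrableOn)
    (by simpa using (integrable_pow_mul_stdGaussianPDF 1).integrableOn)
  simpa using h

theorem setIntegral_Ioi_sq_mul_stdGaussianPDF (t : ℝ) :
    ∫ x in Ioi t, x ^ 2 * stdGaussianPDF x = t * stdGaussianPDF t + gaussTail t := by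
  have hφ := (integrable_pow_mul_stdGaussianPDF 0).integrableOn (s := Ioi t)
  have hx2 := (integrable_pow_mul_stdGaussianPDF 2).integrableOn (s := Ioi t)
  simp only [pow_zero, one_mul] at hφ
  have h := integral_Ioi_of_hasDerivAt_of_integrableOn
    (f := fun x => -(x * stdGaussianPDF x)) (a := t)
    (f' := fun x => x ^ 2 * stdGaussianPDF x - stdGaussianPDF x)
    (fun x _ => ((hasDerivAt_id' x).fun_mul (hasDerivAt_stdGaussianPDF x)).fun_neg.congr_deriv
      (by ring))
    (by simpa using (integrable_pow_mul_stdGaussianPDF 1).neg.integrableOn) (hx2.sub hφ)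
  rw [integral_sub hx2 hφ] at h
  rw [gaussTail]
  linarith

theorem gaussTail_pos (t : ℝ) : 0 < gaussTail t := by
  have h := (integrable_pow_mul_stdGaussianPDF 0).integrableOn (s := Ioi t)
  simp only [pow_zero, one_mul] at h
  rw [gaussTail, setIntegral_pos_iff_support_of_nonneg_ae
    (ae_of_all _ fun x => (stdGaussianPDF_pos x).le) h,
    Function.support_eq_univ fun x => (stdGaussianPDF_pos x).ne']
  simp

theorem invMills_pos (t : ℝ) : 0 < invMills t :=
  div_pos (stdGaussianPDF_pos t) (gaussTail_pos t)

theorem gaussianReal_zero_one_Ioi (t : ℝ) :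
    gaussianReal 0 1 (Ioi t) = ENNReal.ofReal (gaussTail t) := by
  rw [gaussianReal_apply_eq_integral 0 one_ne_zero, gaussTail, stdGaussianPDF_eq_gaussianPDFReal]

theorem setIntegral_gaussianReal_zero_one {s : Set ℝ} (hs : MeasurableSet s) (f : ℝ → ℝ) :
    ∫ x in s, f x ∂gaussianReal 0 1 = ∫ x in s, f x * stdGaussianPDF x := by
  rw [← integral_indicator hs, integral_gaussianReal_eq_integral_smul one_ne_zero,
    ← integral_indicator hs]
  congr 1 with x
  by_cases hx : x ∈ s <;> simp [hx, stdGaussianPDF_eq_gaussianPDFReal, mul_comm]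

theorem gaussianReal_zero_one_Ioi_ne_zero (t : ℝ) : gaussianReal 0 1 (Ioi t) ≠ 0 := by
  simp [gaussianReal_zero_one_Ioi, gaussTail_pos]

instance isProbabilityMeasure_gaussianReal_cond_Ioi (t : ℝ) :
    IsProbabilityMeasure (gaussianReal 0 1)[|Ioi t] :=
  cond_isProbabilityMeasure (gaussianReal_zero_one_Ioi_ne_zero t)

theorem integral_gaussianReal_cond_Ioi (t : ℝ) (f : ℝ → ℝ) :
    ∫ x, f x ∂(gaussianReal 0 1)[|Ioi t]
      = (gaussTail t)⁻¹ * ∫ x in Ioi t, f x * stdGaussianPDF x := by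
  rw [ProbabilityTheory.cond, integral_smul_measure,
    setIntegral_gaussianReal_zero_one measurableSet_Ioi, gaussianReal_zero_one_Ioi,
    ENNReal.toReal_inv, ENNReal.toReal_ofReal (gaussTail_pos t).le, smul_eq_mul]

theorem integral_id_gaussianReal_cond_Ioi (t : ℝ) :
    ∫ x, x ∂(gaussianReal 0 1)[|Ioi t] = invMills t := by
  rw [integral_gaussianReal_cond_Ioi, setIntegral_Ioi_mul_stdGaussianPDF, invMills, inv_mul_eq_div]

theorem integral_sq_gaussianReal_cond_Ioi (t : ℝ) :
    ∫ x, x ^ 2 ∂(gaussianReal 0 1)[|Ioi t] = 1 + t * invMills t := by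
  rw [integral_gaussianReal_cond_Ioi, setIntegral_Ioi_sq_mul_stdGaussianPDF, invMills]
  field_simp [(gaussTail_pos t).ne']
  ring

theorem memLp_id_gaussianReal_cond_Ioi (t : ℝ) : MemLp id 2 (gaussianReal 0 1)[|Ioi t] :=
  ((memLp_id_gaussianReal 2).restrict _).smul_measure
    (by simp [gaussianReal_zero_one_Ioi_ne_zero])

theorem stmt8_general
    {Ω : Type*} [MeasureSpace Ω]
    (d : ℕ)
    (ρ : Fin d → ℝ) (A : Matrix (Fin d) (Fin d) ℝ)
    (X : ℕ → Ω → ℝ) (Z : ℕ → Ω → (Fin d → ℝ))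
    (hindep : iIndepFun (fun i ω => (X i ω, Z i ω)) ℙ)
    (hlaw : ∀ i, Measure.map (fun ω => (X i ω, Z i ω)) ℙ
      = (gaussianReal 0 1).prod (Measure.pi fun _ : Fin d => gaussianReal 0 1))
    (Y : ℕ → Ω → Fin d → ℝ)
    (hY : ∀ i ω ℓ, Y i ω ℓ = ρ ℓ * X i ω + A.mulVec (Z i ω) ℓ)
    (t : ℝ)
    (J : Ω → ℕ) (hJmeas : Measurable J)
    (hJ : ∀ᵐ ω ∂ℙ, t < X (J ω) ω ∧ ∀ i < J ω, X i ω ≤ t) :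
    (∀ ℓ, (∫ ω, Y (J ω) ω ℓ / invMills t) = ρ ℓ) ∧
    (∀ ℓ m, (∫ ω, (Y (J ω) ω ℓ / invMills t) * (Y (J ω) ω m / invMills t))
          - (∫ ω, Y (J ω) ω ℓ / invMills t) * (∫ ω, Y (J ω) ω m / invMills t)
        = (1 / (invMills t) ^ 2)
            * ((A * Aᵀ) ℓ m + (1 + t * invMills t - (invMills t) ^ 2) * (ρ ℓ * ρ m))) ∧
    (∑ ℓ, ((∫ ω, (Y (J ω) ω ℓ / invMills t) ^ 2) - (∫ ω, Y (J ω) ω ℓ / invMills t) ^ 2))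
        = (1 / (invMills t) ^ 2)
            * (Matrix.trace (A * Aᵀ) + (1 + t * invMills t - (invMills t) ^ 2) * ∑ ℓ, ρ ℓ ^ 2) := by
  set s := invMills t
  set η := ((gaussianReal 0 1)[|Ioi t]).prod (Measure.pi fun _ : Fin d => gaussianReal 0 1)
  have hlawJ : Measure.map (fun ω => (X (J ω) ω, Z (J ω) ω)) ℙ = η := by
    rw [map_firstEntry_eq_cond hindep hlaw (measurableSet_Ioi.prod MeasurableSet.univ) hJmeas
      (hJ.mono fun ω h => ⟨⟨h.1, trivial⟩, fun i hi hmem => (h.2 i hi).not_gt hmem.1⟩),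
      cond_prod_univ]
  have hYJ : ∀ g : ℝ × (Fin d → ℝ) → ℝ, Continuous g →
      ∫ ω, g (X (J ω) ω, Z (J ω) ω) = ∫ p, g p ∂η := fun g hg => by
    rw [← hlawJ, integral_map (aemeasurable_of_map_eq hlawJ) hg.aestronglyMeasurable]
  have hν := memLp_id_gaussianReal_cond_Ioi t
  have hκ := isCenteredIsotropic_pi_gaussianReal (Fin d)
  have hmean (ℓ) : ∫ ω, Y (J ω) ω ℓ = ρ ℓ * s := by
    simp_rw [hY]
    rw [hYJ (fun p => ρ ℓ * p.1 + (A *ᵥ p.2) ℓ) (by fun_prop), integral_linearModel hν hκ,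
      integral_id_gaussianReal_cond_Ioi]
  have hsecond (ℓ m) :
      ∫ ω, Y (J ω) ω ℓ * Y (J ω) ω m = ρ ℓ * ρ m * (1 + t * s) + (A * Aᵀ) ℓ m := by
    simp_rw [hY]
    rw [hYJ (fun p => (ρ ℓ * p.1 + (A *ᵥ p.2) ℓ) * (ρ m * p.1 + (A *ᵥ p.2) m)) (by fun_prop),
      integral_linearModel_mul hν hκ, integral_sq_gaussianReal_cond_Ioi]
  have hs : s ≠ 0 := (invMills_pos t).ne'
  have hcov (ℓ m) : (∫ ω, (Y (J ω) ω ℓ / s) * (Y (J ω) ω m / s))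
      - (∫ ω, Y (J ω) ω ℓ / s) * (∫ ω, Y (J ω) ω m / s)
      = (1 / s ^ 2) * ((A * Aᵀ) ℓ m + (1 + t * s - s ^ 2) * (ρ ℓ * ρ m)) := by
    simp_rw [div_mul_div_comm, integral_div, hmean, hsecond]
    field_simp
    ring
  refine ⟨fun ℓ => by rw [integral_div, hmean, mul_div_cancel_right₀ _ hs], hcov, ?_⟩
  simp_rw [sq (∫ ω, _ ∂ℙ), sq (_ / s), hcov]
  rw [← Finset.mul_sum, Finset.sum_add_distrib, ← Finset.mul_sum, Matrix.trace]
  simp [sq]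

/-- for the vector model `Yᵢ = ρ Xᵢ + A Zᵢ ∈ ℝᵈ` and `J = min{i : Xᵢ > t}`,
the vector threshold estimator `ρ̂ = Y_J / s(t)` is unbiased with covariance
`(1/s²(t)) (A Aᵀ + (1 + t s(t) - s²(t)) ρρᵀ)`; in particular
`tr Cov(ρ̂) = (1/s²(t)) (tr(A Aᵀ) + (1 + t s(t) - s²(t)) ‖ρ‖²)`. -/
theorem stmt8
    {Ω : Type*} [MeasureSpace Ω] [IsProbabilityMeasure (ℙ : Measure Ω)]
    (d : ℕ) (hd : 1 ≤ d)
    (ρ : Fin d → ℝ) (A : Matrix (Fin d) (Fin d) ℝ)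
    (X : ℕ → Ω → ℝ) (Z : ℕ → Ω → (Fin d → ℝ))
    (hindep : iIndepFun (fun i ω => (X i ω, Z i ω)) ℙ)
    (hlaw : ∀ i, Measure.map (fun ω => (X i ω, Z i ω)) ℙ
      = (gaussianReal 0 1).prod (Measure.pi fun _ : Fin d => gaussianReal 0 1))
    (Y : ℕ → Ω → Fin d → ℝ)
    (hY : ∀ i ω ℓ, Y i ω ℓ = ρ ℓ * X i ω + A.mulVec (Z i ω) ℓ)
    (t : ℝ) (ht : 0 < t)
    (J : Ω → ℕ) (hJmeas : Measurable J)
    (hJ : ∀ᵐ ω ∂ℙ, t < X (J ω) ω ∧ ∀ i < J ω, X i ω ≤ t) :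
    (∀ ℓ, (∫ ω, Y (J ω) ω ℓ / invMills t) = ρ ℓ) ∧
    (∀ ℓ m, (∫ ω, (Y (J ω) ω ℓ / invMills t) * (Y (J ω) ω m / invMills t))
          - (∫ ω, Y (J ω) ω ℓ / invMills t) * (∫ ω, Y (J ω) ω m / invMills t)
        = (1 / (invMills t) ^ 2)
            * ((A * Aᵀ) ℓ m + (1 + t * invMills t - (invMills t) ^ 2) * (ρ ℓ * ρ m))) ∧
    (∑ ℓ, ((∫ ω, (Y (J ω) ω ℓ / invMills t) ^ 2) - (∫ ω, Y (J ω) ω ℓ / invMills t) ^ 2))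
        = (1 / (invMills t) ^ 2)
            * (Matrix.trace (A * Aᵀ) + (1 + t * invMills t - (invMills t) ^ 2) * ∑ ℓ, ρ ℓ ^ 2) :=
  stmt8_general d ρ A X Z hindep hlaw Y hY t J hJmeas hJ
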